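/- Let 0 ≤ α < 1 and θ > −α with (α,θ) ≠ (0,0), and let k ≥ 1, j ≥ 1 be integers. With q_{k,≤j} := Σ_{m=1}^{j} c_{m,α,θ}·(Γ(θ + αm)/Γ(θ + k))·s_α(k,m), the telescoping identity q_{k,≤j} − q_{k+1,≤j} = c_{j,α,θ}·(Γ(θ + 1 + αj)/Γ(θ + k + 1))·s_α(k,j) holds, where c_{m,α,θ} := Π_{l=1}^{m} Γ(θ + 1 + (l−1)α)/(Γ(1−α)·Γ(θ + lα)) and s_α is defined by s_α(0,0) := 1, s_α(n,m) := 0 for m < 0 or m > n, and s_α(n+1,m) = Γ(1−α)·s_α(n,m−1) + (n − αm)·s_α(n,m). -/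

import Mathlib

/-- `s_α`, defined by `s_α(0,0) = 1`, `s_α(n,m) = 0` for `m > n` (automatic below), and the
recursion `s_α(n+1,m) = Γ(1-α) s_α(n,m-1) + (n - αm) s_α(n,m)` (with `s_α(n,-1) := 0`). -/
noncomputable def salpha (α : ℝ) : ℕ → ℕ → ℝ
  | 0, 0 => 1
  | 0, _ + 1 => 0
  | n + 1, 0 => (n : ℝ) * salpha α n 0
  | n + 1, k + 1 =>
      Real.Gamma (1 - α) * salpha α n k + ((n : ℝ) - α * ((k : ℝ) + 1)) * salpha α n (k + 1)

/-- `c_{m,α,θ} := ∏_{l=1}^{m} Γ(θ + 1 + (l-1)α)/(Γ(1-α) Γ(θ + lα))`. -/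
noncomputable def ccoef (α θ : ℝ) (m : ℕ) : ℝ :=
  ∏ l ∈ Finset.range m,
    Real.Gamma (θ + 1 + l * α) / (Real.Gamma (1 - α) * Real.Gamma (θ + (l + 1) * α))

open Finset Real

lemma salpha_succ_succ (α : ℝ) (n m : ℕ) :
    salpha α (n + 1) (m + 1) =
      Gamma (1 - α) * salpha α n m + ((n : ℝ) - α * ((m : ℝ) + 1)) * salpha α n (m + 1) :=
  rfl

lemma salpha_zero_right (α : ℝ) {n : ℕ} (hn : n ≠ 0) : salpha α n 0 = 0 := by
  induction n with
  | zero => exact absurd rfl hn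
  | succ n ih =>
    show (n : ℝ) * salpha α n 0 = 0
    rcases eq_or_ne n 0 with rfl | hn'
    · simp
    · rw [ih hn', mul_zero]

lemma ccoef_succ_mul (α θ : ℝ) (t : ℕ)
    (h : Gamma (1 - α) * Gamma (θ + α * ((t + 1 : ℕ) : ℝ)) ≠ 0) :
    ccoef α θ (t + 1) * (Gamma (1 - α) * Gamma (θ + α * ((t + 1 : ℕ) : ℝ))) =
      ccoef α θ t * Gamma (θ + 1 + α * t) := by
  rw [Nat.cast_succ] at h ⊢
  rw [ccoef, prod_range_succ, ← ccoef, mul_comm (t : ℝ) α, mul_comm ((t : ℝ) + 1) α, mul_assoc,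
    div_mul_cancel₀ _ h]

/-- After expanding `s_α(k+1, t+1)` by its recursion, `Γ(x+1) = x Γ(x)` at `x = θ + k` and
`x = θ + α(t+1)` makes the `(t+1)`-st term of `q_{k,≤j} - q_{k+1,≤j}` telescope. -/
lemma ccoef_mul_salpha_sub_succ (α θ : ℝ) (k t : ℕ) (hα : α < 1) (hk : 0 < θ + k)
    (ht : 0 < θ + α * ((t + 1 : ℕ) : ℝ)) :
    ccoef α θ (t + 1) * (Gamma (θ + α * ((t + 1 : ℕ) : ℝ)) / Gamma (θ + k)) *
        salpha α k (t + 1) -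
      ccoef α θ (t + 1) * (Gamma (θ + α * ((t + 1 : ℕ) : ℝ)) / Gamma (θ + (k + 1 : ℕ))) *
        salpha α (k + 1) (t + 1) =
      ccoef α θ (t + 1) * (Gamma (θ + 1 + α * ((t + 1 : ℕ) : ℝ)) / Gamma (θ + (k + 1 : ℕ))) *
          salpha α k (t + 1) -
        ccoef α θ t * (Gamma (θ + 1 + α * t) / Gamma (θ + (k + 1 : ℕ))) * salpha α k t := by
  have hG1 : Gamma (1 - α) ≠ 0 := (Gamma_pos_of_pos (by linarith)).ne'
  have hGt : Gamma (θ + α * ((t + 1 : ℕ) : ℝ)) ≠ 0 := (Gamma_pos_of_pos ht).ne'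
  have hGk : Gamma (θ + k) ≠ 0 := (Gamma_pos_of_pos hk).ne'
  have hc := ccoef_succ_mul α θ t (mul_ne_zero hG1 hGt)
  have hGk1 : Gamma (θ + (k + 1 : ℕ)) = (θ + k) * Gamma (θ + k) := by
    rw [Nat.cast_succ, ← add_assoc, Gamma_add_one hk.ne']
  have hGt1 : Gamma (θ + 1 + α * ((t + 1 : ℕ) : ℝ)) =
      (θ + α * ((t + 1 : ℕ) : ℝ)) * Gamma (θ + α * ((t + 1 : ℕ) : ℝ)) := by
    rw [add_right_comm, Gamma_add_one ht.ne']
  rw [mul_div_assoc' (ccoef α θ t), ← hc, hGk1, hGt1, salpha_succ_succ]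
  field_simp
  push_cast
  ring

lemma sum_Icc_one_eq_sum_range {M : Type*} [AddCommMonoid M] (f : ℕ → M) (j : ℕ) :
    ∑ m ∈ Icc 1 j, f m = ∑ t ∈ range j, f (t + 1) := by
  rw [range_eq_Ico, sum_Ico_add', zero_add, Ico_add_one_right_eq_Icc]

theorem statement16_general (α θ : ℝ) (h0 : 0 ≤ α) (h1 : α < 1) (hθ : -α < θ)
    (k j : ℕ) (hk : 1 ≤ k) :
    (∑ m ∈ Finset.Icc 1 j,
        ccoef α θ m * (Real.Gamma (θ + α * m) / Real.Gamma (θ + k)) * salpha α k m) -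
      (∑ m ∈ Finset.Icc 1 j,
        ccoef α θ m * (Real.Gamma (θ + α * m) / Real.Gamma (θ + (k + 1 : ℕ))) *
          salpha α (k + 1) m) =
      ccoef α θ j * (Real.Gamma (θ + 1 + α * j) / Real.Gamma (θ + (k + 1 : ℕ))) *
        salpha α k j := by
  have hθk : 0 < θ + k := by
    have : (1 : ℝ) ≤ k := by exact_mod_cast hk
    linarith
  have hθt (t : ℕ) : 0 < θ + α * ((t + 1 : ℕ) : ℝ) := by
    have : α ≤ α * ((t + 1 : ℕ) : ℝ) := le_mul_of_one_le_right h0 (by simp)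
    linarith
  rw [← sum_sub_distrib, sum_Icc_one_eq_sum_range,
    sum_congr rfl fun t _ => ccoef_mul_salpha_sub_succ α θ k t h1 hθk (hθt t),
    sum_range_sub (fun m => ccoef α θ m * (Gamma (θ + 1 + α * m) / Gamma (θ + (k + 1 : ℕ))) *
      salpha α k m)]
  rw [salpha_zero_right α (by omega : k ≠ 0), mul_zero, sub_zero]

/-- for `0 ≤ α < 1`, `θ > -α`, `(α,θ) ≠ (0,0)` and integers `k, j ≥ 1`,
with `q_{k,≤j} := ∑_{m=1}^{j} c_{m,α,θ} (Γ(θ+αm)/Γ(θ+k)) s_α(k,m)`, one has the telescoping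
identity `q_{k,≤j} - q_{k+1,≤j} = c_{j,α,θ} (Γ(θ+1+αj)/Γ(θ+k+1)) s_α(k,j)`. -/
theorem statement16 (α θ : ℝ) (h0 : 0 ≤ α) (h1 : α < 1) (hθ : -α < θ)
    (hne : ¬(α = 0 ∧ θ = 0)) (k j : ℕ) (hk : 1 ≤ k) (hj : 1 ≤ j) :
    (∑ m ∈ Finset.Icc 1 j,
        ccoef α θ m * (Real.Gamma (θ + α * m) / Real.Gamma (θ + k)) * salpha α k m) -
      (∑ m ∈ Finset.Icc 1 j,
        ccoef α θ m * (Real.Gamma (θ + α * m) / Real.Gamma (θ + (k + 1 : ℕ))) *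
          salpha α (k + 1) m) =
      ccoef α θ j * (Real.Gamma (θ + 1 + α * j) / Real.Gamma (θ + (k + 1 : ℕ))) *
        salpha α k j :=
  statement16_general α θ h0 h1 hθ k j hk
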